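/- arXiv:1809.04205 — 2 statements merged into one kernel-verified Lean document; each statement's English description precedes it below -/
import Mathlib

section
/- Let X be a doodle switch with operation · and derived operation • defined by S⁻¹(x,y) = (y•x, x•y). Then the binary operation •⁻¹ defined by x •⁻¹ y = x·(y ·⁻¹ x) satisfies (x•y)•⁻¹y = x and (x•⁻¹y)•y = x for all x,y ∈ X, and it is the unique binary operation with these properties. -/
/-- A doodle switch: a set with a binary operation satisfying the axioms
corresponding to the R1 and R2 moves. -/
structure DoodleSwitch (X : Type*) where
  op : X → X → X
  comm_iff : ∀ a b : X, op a b = op b a ↔ a = b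
  existsUnique_left : ∀ a b : X, ∃! u : X, a = op u b
  S_bij : Function.Bijective (fun p : X × X => (op p.2 p.1, op p.1 p.2))

/-- The map `S(a,b) = (b·a, a·b)`. -/
def DoodleSwitch.S {X : Type*} (D : DoodleSwitch X) : X × X → X × X :=
  fun p => (D.op p.2 p.1, D.op p.1 p.2)

/-! Writing `z = x·(y ·⁻¹ x)`, the pair `(y ·⁻¹ x, x)` is sent by `S` to `(z, y)`, so
`S⁻¹(z, y) = (y ·⁻¹ x, x)` gives `z • y = x`. Conversely `S⁻¹(x, y) = (y • x, x • y)` says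
`y = (y • x)·(x • y)`, hence `y ·⁻¹ (x • y) = y • x` and `(x • y)·(y ·⁻¹ (x • y)) = x`.
Uniqueness follows since any `f` with `f x y • y = x` must then equal `x·(y ·⁻¹ x)`. -/

namespace DoodleSwitch

variable {X : Type*} (D : DoodleSwitch X) {inv bullet : X → X → X}

theorem S_injective : Function.Injective D.S := D.S_bij.1

theorem bullet_eq_of_S_eq (hb : ∀ x y : X, D.S (bullet y x, bullet x y) = (x, y))
    {a b x y : X} (h : D.S (a, b) = (x, y)) : bullet y x = a ∧ bullet x y = b :=
  Prod.ext_iff.mp (D.S_injective ((hb x y).trans h.symm))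

theorem op_bullet_inv (hinv : ∀ x y : X, inv (D.op x y) y = x)
    (hb : ∀ x y : X, D.S (bullet y x, bullet x y) = (x, y)) (x y : X) :
    D.op (bullet x y) (inv y (bullet x y)) = x := by
  have hy : D.op (bullet y x) (bullet x y) = y := congrArg Prod.snd (hb x y)
  have hinv_y : inv y (bullet x y) = bullet y x :=
    calc inv y (bullet x y) = inv (D.op (bullet y x) (bullet x y)) (bullet x y) := by rw [hy]
      _ = bullet y x := hinv _ _
  rw [hinv_y]
  exact congrArg Prod.fst (hb x y)

theorem bullet_op_inv (hinv : ∀ x y : X, D.op (inv x y) y = x)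
    (hb : ∀ x y : X, D.S (bullet y x, bullet x y) = (x, y)) (x y : X) :
    bullet (D.op x (inv y x)) y = x := by
  have hS : D.S (inv y x, x) = (D.op x (inv y x), y) := by
    simp only [S, hinv]
  exact (D.bullet_eq_of_S_eq hb hS).2

end DoodleSwitch

theorem stmt3 {X : Type*} (D : DoodleSwitch X)
    (inv : X → X → X)
    (hinv : ∀ x y : X, inv (D.op x y) y = x ∧ D.op (inv x y) y = x)
    (bullet : X → X → X)
    (hb : ∀ x y : X, D.S (bullet y x, bullet x y) = (x, y)) :
    (∀ x y : X, (fun x y => D.op x (inv y x)) (bullet x y) y = x ∧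
        bullet ((fun x y => D.op x (inv y x)) x y) y = x) ∧
    (∀ f : X → X → X,
        (∀ x y : X, f (bullet x y) y = x ∧ bullet (f x y) y = x) →
        f = fun x y => D.op x (inv y x)) := by
  have op_bullet_inv := D.op_bullet_inv (fun x y => (hinv x y).1) hb
  have bullet_op_inv := D.bullet_op_inv (fun x y => (hinv x y).2) hb
  refine ⟨fun x y => ⟨op_bullet_inv x y, bullet_op_inv x y⟩, fun f hf => ?_⟩
  funext x y
  have h := op_bullet_inv (f x y) y
  rw [(hf x y).2] at h
  exact h.symm
end

section
/- Let X be a doodle switch with derived operation • (defined by S⁻¹(x,y) = (y•x, x•y)). Then (X, •) is itself a doodle switch: a•b = b•a iff a = b; for each a,b ∈ X there is a unique u with a = u•b; and the map S'(a,b) = (b•a, a•b) is a bijection of X² (indeed S' = τ∘S⁻¹∘τ where τ is the transposition). -/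
/-!
The switch map `T(a,b) = (b•a, a•b)` of `•` is `S⁻¹`, so statements about `•` become
statements about `·` read through `S`. Since `T(a,b) = (c,c)` forces `(a,b) = S(c,c) = (c·c, c·c)`,
`•` separates distinct elements. And `T(u,b) = (w,a)` iff `(u,b) = S(w,a) = (a·w, w·a)`, so
`a = u•b` iff `u = a·v` for the unique `v` with `b = v·a`.
-/

open Function

def switchMap {X : Type*} (op : X → X → X) (p : X × X) : X × X :=
  (op p.2 p.1, op p.1 p.2)

section

variable {X : Type*} {op op' : X → X → X}

theorem eq_of_comm_of_leftInverse_switchMap (hinv : LeftInverse (switchMap op) (switchMap op'))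
    {a b : X} (h : op' a b = op' b a) : a = b := by
  have hab : switchMap op (op' a b, op' a b) = (a, b) := by
    simpa [switchMap, h] using hinv (a, b)
  simp only [switchMap, Prod.mk.injEq] at hab
  exact hab.1.symm.trans hab.2

theorem eq_op'_iff_of_inverse_switchMap (hST : LeftInverse (switchMap op) (switchMap op'))
    (hTS : RightInverse (switchMap op) (switchMap op')) {a b u : X} :
    a = op' u b ↔ ∃ w, b = op w a ∧ u = op a w := by
  constructor
  · rintro rfl
    have hub := hST (u, b)
    simp only [switchMap, Prod.mk.injEq] at hub
    exact ⟨op' b u, hub.2.symm, hub.1.symm⟩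
  · rintro ⟨w, rfl, rfl⟩
    have hwa := hTS (w, a)
    simp only [switchMap, Prod.mk.injEq] at hwa
    exact hwa.2.symm

theorem existsUnique_eq_op'_of_inverse_switchMap
    (hop : ∀ a b : X, ∃! u : X, a = op u b)
    (hST : LeftInverse (switchMap op) (switchMap op'))
    (hTS : RightInverse (switchMap op) (switchMap op')) (a b : X) :
    ∃! u : X, a = op' u b := by
  obtain ⟨v, hv, hv_unique⟩ := hop b a
  refine ⟨op a v, (eq_op'_iff_of_inverse_switchMap hST hTS).2 ⟨v, hv, rfl⟩, ?_⟩
  intro u hu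
  obtain ⟨w, hw, rfl⟩ := (eq_op'_iff_of_inverse_switchMap hST hTS).1 hu
  rw [hv_unique w hw]

end

theorem stmt14 {X : Type*} (D : DoodleSwitch X)
    (bullet : X → X → X)
    (hb : ∀ x y : X, D.S (bullet y x, bullet x y) = (x, y)) :
    (∀ a b : X, bullet a b = bullet b a ↔ a = b) ∧
    (∀ a b : X, ∃! u : X, a = bullet u b) ∧
    Function.Bijective (fun p : X × X => (bullet p.2 p.1, bullet p.1 p.2)) := by
  have hST : LeftInverse (switchMap D.op) (switchMap bullet) := fun p => hb p.1 p.2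
  have hTS : RightInverse (switchMap D.op) (switchMap bullet) :=
    hST.rightInverse_of_injective D.S_bij.injective
  refine ⟨fun a b => ⟨eq_of_comm_of_leftInverse_switchMap hST, fun h => h ▸ rfl⟩,
    existsUnique_eq_op'_of_inverse_switchMap D.existsUnique_left hST hTS,
    hST.injective, hTS.surjective⟩
end
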